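/- arXiv:2505.06769 — 3 statements merged into one kernel-verified Lean document; each statement's English description precedes it below -/
import Mathlib

section
/- Let M be a Markov chain with targets T and weight function w : T → [0,∞) in which every state can reach T along edges, let s ∉ T, and let γ ≥ 0. Let f : S → ℝ be any vector with f ≥ val_{M[s=γ]} pointwise, where val_{M[s=γ]} is the weighted reachability value vector of the reduced MC M[s = γ], and set γ' := ∑_{s'} δ(s,s') f(s'). If γ' < γ, then val_M(s) < γ, where val_M is the weighted reachability value vector of M. -/
/-- A finite Markov chain: transition function `δ` (nonnegative, rows sum to 1)
together with a set `T` of absorbing target states. There is an edge `s → s'`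
iff `δ s s' > 0`. -/
structure MC (S : Type) [Fintype S] [DecidableEq S] where
  δ : S → S → ℝ
  T : Finset S
  nonneg : ∀ s s' : S, 0 ≤ δ s s'
  rowsum : ∀ s : S, ∑ s' : S, δ s s' = 1
  absorbing : ∀ t ∈ T, δ t t = 1

variable {S : Type} [Fintype S] [DecidableEq S]

/-- Edge relation of a Markov chain: `s → s'` iff `δ s s' > 0`. -/
def MC.edge (M : MC S) (a b : S) : Prop := 0 < M.δ a b

/-- `pathLen r n a b`: there is a path of length `n` from `a` to `b` along `r`. -/
def pathLen (r : S → S → Prop) : ℕ → S → S → Prop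
  | 0 => fun a b => a = b
  | n + 1 => fun a c => ∃ b, r a b ∧ pathLen r n b c

/-- `reaches r A s`: `s` can reach the set `A` along the relation `r`. -/
def reaches (r : S → S → Prop) (A : Set S) (s : S) : Prop :=
  ∃ n, ∃ a ∈ A, pathLen r n s a

/-- Length of a shortest path from `s` to the set `A` along `r`. -/
noncomputable def distTo (r : S → S → Prop) (A : Set S) (s : S) : ℕ :=
  sInf {n | ∃ a ∈ A, pathLen r n s a}

/-- Level `0`: the targets together with all states that cannot reach the targets. -/
def MC.level0 (M : MC S) : Set S :=
  {s | s ∈ M.T ∨ ¬ reaches M.edge (M.T : Set S) s}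

/-- The levels of a Markov chain: `ℓ_0` is `level0`, and for `i ≥ 1`, `ℓ_i` is the
set of states whose shortest edge-path distance to `ℓ_0` is exactly `i`. -/
noncomputable def MC.levelSet (M : MC S) : ℕ → Set S
  | 0 => M.level0
  | i + 1 => {s | distTo M.edge M.level0 s = i + 1}

/-- `M` has (exactly) `k` levels: `ℓ_k` is the last nonempty level. -/
def MC.hasLevels (M : MC S) (k : ℕ) : Prop :=
  (M.levelSet k).Nonempty ∧ ∀ i, k < i → M.levelSet i = ∅

/-- One-step transition matrix of the Markov chain. -/
noncomputable def MC.P (M : MC S) : Matrix S S ℝ := Matrix.of M.δ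

/-- Weighted reachability value `val(s) = E_s[w(X_{t*}) · 1{t* < ∞}]`, where `t*` is
the first hitting time of `T`. Since `T` is absorbing, this equals the supremum
(monotone limit) over `n` of `∑_{t ∈ T} (δⁿ)(s,t)·w(t)`. -/
noncomputable def MC.reachVal (M : MC S) (w : S → ℝ) (s : S) : ℝ :=
  ⨆ n : ℕ, ∑ t ∈ M.T, (M.P ^ n) s t * w t

/-- Stochastic shortest path value `val(s) = E_s[∑_{t=0}^{t*} w(X_t)]`, where `t*` is
the first hitting time of `T`: the expected weight collected strictly before `T`
(states outside `T`, counted via the `n`-step distributions) plus the expected weight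
of the first target state hit. -/
noncomputable def MC.sspVal (M : MC S) (w : S → ℝ) (s : S) : ℝ :=
  (∑' n : ℕ, ∑ s' ∈ Finset.univ.filter (fun x => x ∉ M.T), (M.P ^ n) s s' * w s')
    + M.reachVal w s

/-- Smallest positive transition probability of the Markov chain. -/
noncomputable def MC.pmin (M : MC S) : ℝ :=
  sInf {p : ℝ | 0 < p ∧ ∃ s s' : S, M.δ s s' = p}

/-- Reachability Bellman update. -/
noncomputable def MC.reachUpdate (M : MC S) (w : S → ℝ) (v : S → ℝ) : S → ℝ :=
  fun s => if s ∈ M.T then w s else ∑ s' : S, M.δ s s' * v s'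

/-- SSP Bellman update. -/
noncomputable def MC.sspUpdate (M : MC S) (w : S → ℝ) (v : S → ℝ) : S → ℝ :=
  fun s => if s ∈ M.T then w s else w s + ∑ s' : S, M.δ s s' * v s'

/-- The reduced Markov chain `M[s = ·]`: the state `s` is made absorbing (its row of
`δ` replaced by the point mass at `s`) and added to the target set. -/
def MC.reduce (M : MC S) (s : S) : MC S where
  δ := fun a b => if a = s then (if b = s then 1 else 0) else M.δ a b
  T := insert s M.T
  nonneg := by
    intro a b
    by_cases h : a = s
    · by_cases h' : b = s <;> simp [h, h']
    · simpa [h] using M.nonneg a b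
  rowsum := by
    intro a
    by_cases h : a = s
    · simp [h]
    · simpa [h] using M.rowsum a
  absorbing := by
    intro t ht
    rcases Finset.mem_insert.mp ht with h | h
    · simp [h]
    · by_cases h' : t = s
      · simp [h']
      · simpa [h'] using M.absorbing t h

/-- Probability, in `M`, of ever visiting the state `s` when starting from `a`,
i.e. `P_a(∃ t ≥ 0, X_t = s)` (computed as a reachability value after making `s`
absorbing, which does not change the dynamics before the first visit to `s`). -/
noncomputable def MC.hitProb (M : MC S) (a s : S) : ℝ :=
  (M.reduce s).reachVal (fun b => if b = s then 1 else 0) a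

/-- Probability of having reached `T` within `i` steps, `P_s(∃ t ≤ i, X_t ∈ T)`;
since `T` is absorbing this equals `∑_{t ∈ T} (δ^i)(s,t)`. -/
noncomputable def MC.hitBy (M : MC S) (s : S) (i : ℕ) : ℝ :=
  ∑ t ∈ M.T, (M.P ^ i) s t

/-!
The reachability value is the least nonnegative superharmonic majorant of the weights, and it
satisfies the Bellman equation `val(a) = ∑ δ(a,b) val(b)`. Let `g := val_{M[s=γ]}`. Away from `s`
the rows of `M` and `M[s=γ]` agree, so `g` is `M`-superharmonic there; at `s` we have
`∑ δ(s,b) g(b) ≤ ∑ δ(s,b) f(b) = γ' < γ = g(s)`. Hence `val_M ≤ g ≤ f`, and one Bellman step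
at `s` gives `val_M(s) ≤ γ' < γ`.
-/

open Filter Topology

namespace MC

variable (M : MC S)

noncomputable def valueIter (w : S → ℝ) (n : ℕ) (a : S) : ℝ :=
  ∑ t ∈ M.T, (M.P ^ n) a t * w t

theorem reachVal_eq_iSup_valueIter (w : S → ℝ) (a : S) :
    M.reachVal w a = ⨆ n, M.valueIter w n a :=
  rfl

theorem valueIter_zero (w : S → ℝ) (a : S) :
    M.valueIter w 0 a = if a ∈ M.T then w a else 0 := by
  simp only [valueIter, pow_zero, Matrix.one_apply, ite_mul, one_mul, zero_mul]
  exact Finset.sum_ite_eq M.T a w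

theorem valueIter_succ (w : S → ℝ) (n : ℕ) (a : S) :
    M.valueIter w (n + 1) a = ∑ b, M.δ a b * M.valueIter w n b := by
  simp only [valueIter, pow_succ', Matrix.mul_apply, Finset.sum_mul, Finset.mul_sum]
  rw [Finset.sum_comm]
  exact Finset.sum_congr rfl fun b _ => Finset.sum_congr rfl fun t _ => by
    rw [MC.P, Matrix.of_apply, mul_assoc]

theorem δ_eq_zero_of_mem {t : S} (ht : t ∈ M.T) {b : S} (hb : b ≠ t) : M.δ t b = 0 := by
  have hrest : ∑ c ∈ Finset.univ.erase t, M.δ t c = 0 := by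
    have := Finset.add_sum_erase Finset.univ (M.δ t) (Finset.mem_univ t)
    rw [M.rowsum t, M.absorbing t ht] at this
    linarith
  exact (Finset.sum_eq_zero_iff_of_nonneg fun c _ => M.nonneg t c).mp hrest b
    (Finset.mem_erase.mpr ⟨hb, Finset.mem_univ b⟩)

theorem valueIter_of_mem (w : S → ℝ) {t : S} (ht : t ∈ M.T) (n : ℕ) :
    M.valueIter w n t = w t := by
  induction n with
  | zero => simp [valueIter_zero, ht]
  | succ n ih =>
    rw [valueIter_succ, Finset.sum_eq_single t
      (fun b _ hb => by rw [M.δ_eq_zero_of_mem ht hb, zero_mul]) (by simp),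
      M.absorbing t ht, one_mul, ih]

theorem reachVal_of_mem (w : S → ℝ) {t : S} (ht : t ∈ M.T) : M.reachVal w t = w t := by
  simp only [reachVal_eq_iSup_valueIter, M.valueIter_of_mem w ht, ciSup_const]

theorem valueIter_le_of_superharmonic {w g : S → ℝ} (hg_nonneg : ∀ a, 0 ≤ g a)
    (hg_T : ∀ t ∈ M.T, w t ≤ g t) (hg : ∀ a, ∑ b, M.δ a b * g b ≤ g a) (n : ℕ) (a : S) :
    M.valueIter w n a ≤ g a := by
  induction n generalizing a with
  | zero =>
    rw [valueIter_zero]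
    split_ifs with ha
    exacts [hg_T a ha, hg_nonneg a]
  | succ n ih =>
    rw [valueIter_succ]
    exact (Finset.sum_le_sum fun b _ => mul_le_mul_of_nonneg_left (ih b) (M.nonneg a b)).trans
      (hg a)

theorem reachVal_le_of_superharmonic {w g : S → ℝ} (hg_nonneg : ∀ a, 0 ≤ g a)
    (hg_T : ∀ t ∈ M.T, w t ≤ g t) (hg : ∀ a, ∑ b, M.δ a b * g b ≤ g a) (a : S) :
    M.reachVal w a ≤ g a :=
  (M.reachVal_eq_iSup_valueIter w a).trans_le <|
    ciSup_le fun n => M.valueIter_le_of_superharmonic hg_nonneg hg_T hg n a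

theorem valueIter_nonneg {w : S → ℝ} (hw : ∀ t ∈ M.T, 0 ≤ w t) (n : ℕ) (a : S) :
    0 ≤ M.valueIter w n a := by
  induction n generalizing a with
  | zero =>
    rw [valueIter_zero]
    split_ifs with ha
    exacts [hw a ha, le_rfl]
  | succ n ih =>
    rw [valueIter_succ]
    exact Finset.sum_nonneg fun b _ => mul_nonneg (M.nonneg a b) (ih b)

theorem valueIter_mono {w : S → ℝ} (hw : ∀ t ∈ M.T, 0 ≤ w t) (a : S) :
    Monotone fun n => M.valueIter w n a := by
  refine monotone_nat_of_le_succ fun n => ?_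
  induction n generalizing a with
  | zero =>
    by_cases ha : a ∈ M.T
    · rw [M.valueIter_of_mem w ha, M.valueIter_of_mem w ha]
    · rw [valueIter_zero, if_neg ha]
      exact M.valueIter_nonneg hw 1 a
  | succ n ih =>
    rw [M.valueIter_succ w (n + 1), M.valueIter_succ w n]
    exact Finset.sum_le_sum fun b _ => mul_le_mul_of_nonneg_left (ih b) (M.nonneg a b)

theorem valueIter_bddAbove {w : S → ℝ} (hw : ∀ t ∈ M.T, 0 ≤ w t) (a : S) :
    BddAbove (Set.range fun n => M.valueIter w n a) := by
  refine ⟨∑ t ∈ M.T, w t, Set.forall_mem_range.mpr fun n =>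
    M.valueIter_le_of_superharmonic (g := fun _ => ∑ t ∈ M.T, w t)
      (fun _ => Finset.sum_nonneg hw) (fun t ht => Finset.single_le_sum hw ht) (fun b => ?_) n a⟩
  rw [← Finset.sum_mul, M.rowsum, one_mul]

theorem tendsto_valueIter {w : S → ℝ} (hw : ∀ t ∈ M.T, 0 ≤ w t) (a : S) :
    Tendsto (fun n => M.valueIter w n a) atTop (𝓝 (M.reachVal w a)) :=
  M.reachVal_eq_iSup_valueIter w a ▸
    tendsto_atTop_ciSup (M.valueIter_mono hw a) (M.valueIter_bddAbove hw a)

theorem reachVal_nonneg {w : S → ℝ} (hw : ∀ t ∈ M.T, 0 ≤ w t) (a : S) :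
    0 ≤ M.reachVal w a :=
  (M.valueIter_nonneg hw 0 a).trans <|
    (le_ciSup (M.valueIter_bddAbove hw a) 0).trans_eq (M.reachVal_eq_iSup_valueIter w a).symm

theorem reachVal_eq_sum {w : S → ℝ} (hw : ∀ t ∈ M.T, 0 ≤ w t) (a : S) :
    M.reachVal w a = ∑ b, M.δ a b * M.reachVal w b := by
  have hsucc := (M.tendsto_valueIter hw a).comp (tendsto_add_atTop_nat 1)
  have hsum : Tendsto (fun n => ∑ b, M.δ a b * M.valueIter w n b) atTop
      (𝓝 (∑ b, M.δ a b * M.reachVal w b)) :=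
    tendsto_finsetSum _ fun b _ => (M.tendsto_valueIter hw b).const_mul (M.δ a b)
  simp only [Function.comp_def, valueIter_succ] at hsucc
  exact tendsto_nhds_unique hsucc hsum

theorem reduce_δ_of_ne (s : S) {a : S} (ha : a ≠ s) (b : S) : (M.reduce s).δ a b = M.δ a b :=
  if_neg ha

end MC

theorem stmt_5_general {S : Type} [Fintype S] [DecidableEq S]
    (M : MC S)
    (w : S → ℝ) (hw : ∀ t ∈ M.T, 0 ≤ w t)
    (s : S) (hs : s ∉ M.T) (γ : ℝ) (hγ : 0 ≤ γ)
    (f : S → ℝ)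
    (hf : ∀ a : S, (M.reduce s).reachVal (Function.update w s γ) a ≤ f a)
    (h : ∑ s' : S, M.δ s s' * f s' < γ) :
    M.reachVal w s < γ := by
  set w' := Function.update w s γ
  set g := (M.reduce s).reachVal w'
  have hw' : ∀ t ∈ (M.reduce s).T, 0 ≤ w' t := by
    intro t ht
    rcases eq_or_ne t s with rfl | hts
    · simpa [w'] using hγ
    · simpa [w', hts] using hw t ((Finset.mem_insert.mp ht).resolve_left hts)
  have hg_s : g s = γ := by
    simpa [w'] using (M.reduce s).reachVal_of_mem w' (Finset.mem_insert_self s M.T)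
  have hg_T : ∀ t ∈ M.T, w t ≤ g t := fun t ht => by
    have hts : t ≠ s := fun hts => hs (hts ▸ ht)
    simpa [w', hts] using ((M.reduce s).reachVal_of_mem w' (Finset.mem_insert_of_mem ht)).ge
  have hg_super : ∀ a, ∑ b, M.δ a b * g b ≤ g a := by
    intro a
    rcases eq_or_ne a s with rfl | has
    · calc ∑ b, M.δ a b * g b ≤ ∑ b, M.δ a b * f b :=
            Finset.sum_le_sum fun b _ => mul_le_mul_of_nonneg_left (hf b) (M.nonneg a b)
        _ ≤ g a := hg_s ▸ h.le
    · simp only [← M.reduce_δ_of_ne s has]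
      exact ((M.reduce s).reachVal_eq_sum hw' a).ge
  have hval_le_f : ∀ a, M.reachVal w a ≤ f a := fun a =>
    (M.reachVal_le_of_superharmonic ((M.reduce s).reachVal_nonneg hw') hg_T hg_super a).trans
      (hf a)
  calc M.reachVal w s = ∑ b, M.δ s b * M.reachVal w b := M.reachVal_eq_sum hw s
    _ ≤ ∑ b, M.δ s b * f b :=
        Finset.sum_le_sum fun b _ => mul_le_mul_of_nonneg_left (hval_le_f b) (M.nonneg s b)
    _ < γ := h

/-- Verification of a guess as an upper bound: if `f` is a pointwise
upper bound on the weighted reachability value vector of the reduced Markov chain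
`M[s = γ]` and `γ' = ∑_{s'} δ(s,s')·f(s') < γ`, then `val_M(s) < γ`. -/
theorem stmt_5 {S : Type} [Fintype S] [DecidableEq S] [Nonempty S]
    (M : MC S) (hreach : ∀ a : S, reaches M.edge (M.T : Set S) a)
    (w : S → ℝ) (hw : ∀ t ∈ M.T, 0 ≤ w t)
    (s : S) (hs : s ∉ M.T) (γ : ℝ) (hγ : 0 ≤ γ)
    (f : S → ℝ)
    (hf : ∀ a : S, (M.reduce s).reachVal (Function.update w s γ) a ≤ f a)
    (h : ∑ s' : S, M.δ s s' * f s' < γ) :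
    M.reachVal w s < γ :=
  stmt_5_general M w hw s hs γ hγ f hf h
end

section
/- Let M be a Markov chain with k ≥ 1 levels in which every state can reach T along edges, and let w : S → (0,∞) be a weight function. Then for every state s ∈ S, the stochastic shortest path value satisfies val(s) ≤ w_max·(k+1)/p_min^k, where w_max := max_{s ∈ S} w(s). -/
variable {S : Type} [Fintype S] [DecidableEq S]

/-!
From every state there is an edge path of length at most `k` into `T`: a state outside `ℓ_0`
lies at distance at most `k` from `ℓ_0`, and `ℓ_0 ⊆ T` because every state reaches `T`.
Padding it with self-loops at its absorbing endpoint gives a path of length exactly `k`, of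
probability at least `p_min^k`. So the probability of still being outside `T` shrinks by the
factor `1 - p_min^k` every `k` steps, and the expected number of steps spent outside `T` is at
most `k / p_min^k`. Each of these steps costs at most `w_max`, and the target state finally hit
costs at most `w_max` once more.
-/

open Finset Matrix

theorem pow_le_of_add_le_mul {q : ℕ → ℝ} {k : ℕ} {r : ℝ} (hr : 0 ≤ r)
    (hq : ∀ n, q n ≤ 1) (hqk : ∀ n, q (n + k) ≤ r * q n) (n m : ℕ) :
    q (n + m * k) ≤ r ^ m := by
  induction m with
  | zero => simpa using hq n
  | succ m ih =>
    calc q (n + (m + 1) * k) = q (n + m * k + k) := by ring_nf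
      _ ≤ r * q (n + m * k) := hqk _
      _ ≤ r * r ^ m := mul_le_mul_of_nonneg_left ih hr
      _ = r ^ (m + 1) := (pow_succ' r m).symm

theorem sum_range_mul_le_of_add_le_mul {q : ℕ → ℝ} {k : ℕ} {r : ℝ} (hr : 0 ≤ r)
    (hq : ∀ n, q n ≤ 1) (hqk : ∀ n, q (n + k) ≤ r * q n) (m : ℕ) :
    ∑ n ∈ range (m * k), q n ≤ k * ∑ i ∈ range m, r ^ i := by
  induction m with
  | zero => simp
  | succ m ih =>
    have hblock : ∑ j ∈ range k, q (m * k + j) ≤ k * r ^ m := by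
      calc ∑ j ∈ range k, q (m * k + j) ≤ ∑ _j ∈ range k, r ^ m :=
            sum_le_sum fun j _ => by
              simpa [add_comm] using pow_le_of_add_le_mul hr hq hqk j m
        _ = k * r ^ m := by simp
    rw [add_mul, one_mul, sum_range_add, sum_range_succ, mul_add]
    exact add_le_add ih hblock

theorem sum_range_le_of_add_le_mul {q : ℕ → ℝ} {k : ℕ} {r : ℝ} (hk : 1 ≤ k) (hr0 : 0 ≤ r)
    (hr1 : r < 1) (hq0 : ∀ n, 0 ≤ q n) (hq1 : ∀ n, q n ≤ 1)
    (hqk : ∀ n, q (n + k) ≤ r * q n) (N : ℕ) :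
    ∑ n ∈ range N, q n ≤ k / (1 - r) :=
  calc ∑ n ∈ range N, q n ≤ ∑ n ∈ range (N * k), q n :=
        sum_le_sum_of_subset_of_nonneg (range_subset_range.2 (Nat.le_mul_of_pos_right N hk))
          fun n _ _ => hq0 n
    _ ≤ k * ∑ i ∈ range N, r ^ i := sum_range_mul_le_of_add_le_mul hr0 hq1 hqk N
    _ ≤ k * (r ^ 0 / (1 - r)) := by
        rw [range_eq_Ico]
        exact mul_le_mul_of_nonneg_left (geom_sum_Ico_le_of_lt_one hr0 hr1) k.cast_nonneg
    _ = k / (1 - r) := by ring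

section pathLen

variable {α : Type} {r : α → α → Prop}

theorem pathLen_succ_of_pathLen {n : ℕ} {a b c : α} (hab : pathLen r n a b) (hbc : r b c) :
    pathLen r (n + 1) a c := by
  induction n generalizing a with
  | zero => exact ⟨c, hab ▸ hbc, rfl⟩
  | succ n ih =>
    obtain ⟨a', haa', ha'b⟩ := hab
    exact ⟨a', haa', ih ha'b⟩

theorem pathLen_of_le_of_loop {n m : ℕ} {a t : α} (hloop : r t t) (h : pathLen r n a t)
    (hnm : n ≤ m) : pathLen r m a t := by
  induction m, hnm using Nat.le_induction with
  | base => exact h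
  | succ m _ ih => exact pathLen_succ_of_pathLen ih hloop

end pathLen

namespace MC

variable (M : MC S)

theorem P_mem_rowStochastic : M.P ∈ rowStochastic ℝ S :=
  mem_rowStochastic_iff_sum.2 ⟨M.nonneg, M.rowsum⟩

theorem P_pow_nonneg (n : ℕ) (a b : S) : 0 ≤ (M.P ^ n) a b :=
  nonneg_of_mem_rowStochastic (pow_mem M.P_mem_rowStochastic n)

theorem sum_P_pow (n : ℕ) (a : S) : ∑ b, (M.P ^ n) a b = 1 :=
  sum_row_of_mem_rowStochastic (pow_mem M.P_mem_rowStochastic n) a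

theorem pmin_le {a b : S} (h : M.edge a b) : M.pmin ≤ M.δ a b :=
  csInf_le ⟨0, fun _ hp => hp.1.le⟩ ⟨h, a, b, rfl⟩

section pmin

variable [Nonempty S]

theorem pmin_mem : M.pmin ∈ {p : ℝ | 0 < p ∧ ∃ s s' : S, M.δ s s' = p} := by
  have hfin : {p : ℝ | 0 < p ∧ ∃ s s' : S, M.δ s s' = p}.Finite :=
    (Set.finite_range fun q : S × S => M.δ q.1 q.2).subset fun p ⟨_, s, s', hp⟩ => ⟨(s, s'), hp⟩
  obtain ⟨s⟩ := ‹Nonempty S›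
  obtain ⟨s', hs'⟩ : ∃ s', 0 < M.δ s s' := by
    by_contra! h
    have := M.rowsum s
    rw [sum_eq_zero fun s' _ => le_antisymm (h s') (M.nonneg s s')] at this
    exact zero_ne_one this
  exact Set.Nonempty.csInf_mem ⟨_, hs', s, s', rfl⟩ hfin

theorem pmin_pos : 0 < M.pmin := M.pmin_mem.1

theorem pmin_le_one : M.pmin ≤ 1 := by
  obtain ⟨_, s, s', h⟩ := M.pmin_mem
  exact h ▸ le_one_of_mem_rowStochastic M.P_mem_rowStochastic

theorem pmin_pow_le_one (k : ℕ) : M.pmin ^ k ≤ 1 :=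
  pow_le_one₀ M.pmin_pos.le M.pmin_le_one

theorem pmin_pow_le_P_pow_of_pathLen {n : ℕ} {a b : S} (h : pathLen M.edge n a b) :
    M.pmin ^ n ≤ (M.P ^ n) a b := by
  induction n generalizing a with
  | zero => cases h; simp
  | succ n ih =>
    obtain ⟨c, hac, hcb⟩ := h
    calc M.pmin ^ (n + 1) = M.pmin * M.pmin ^ n := pow_succ' _ _
      _ ≤ M.P a c * (M.P ^ n) c b :=
          mul_le_mul (M.pmin_le hac) (ih hcb) (pow_nonneg M.pmin_pos.le n) (M.nonneg a c)
      _ ≤ ∑ d, M.P a d * (M.P ^ n) d b :=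
          single_le_sum (f := fun d => M.P a d * (M.P ^ n) d b)
            (fun d _ => mul_nonneg (M.nonneg a d) (M.P_pow_nonneg n d b)) (mem_univ c)
      _ = (M.P ^ (n + 1)) a b := by rw [pow_succ', mul_apply]

end pmin

theorem exists_pathLen_mem_T {k : ℕ} (hlev : M.hasLevels k)
    (hreach : ∀ a : S, reaches M.edge (M.T : Set S) a) (s : S) :
    ∃ t ∈ M.T, pathLen M.edge k s t := by
  obtain ⟨t, ht, hpath⟩ := Nat.sInf_mem (s := {n | ∃ a ∈ M.level0, pathLen M.edge n s a})
    (by obtain ⟨n, a, ha, hp⟩ := hreach s; exact ⟨n, a, Or.inl ha, hp⟩)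
  have htT : t ∈ M.T := ht.resolve_right (not_not.2 (hreach t))
  have hdist : distTo M.edge M.level0 s ≤ k := by
    by_contra! hgt
    obtain ⟨i, hi⟩ := Nat.exists_eq_add_of_lt hgt
    have hs : s ∈ M.levelSet (k + i + 1) := hi
    rwa [hlev.2 _ (by omega)] at hs
  have hloop : M.edge t t := by rw [edge, M.absorbing t htT]; exact one_pos
  exact ⟨t, htT, pathLen_of_le_of_loop hloop hpath hdist⟩

theorem pmin_pow_le_hitBy [Nonempty S] {k : ℕ} (hlev : M.hasLevels k)
    (hreach : ∀ a : S, reaches M.edge (M.T : Set S) a) (s : S) :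
    M.pmin ^ k ≤ M.hitBy s k := by
  obtain ⟨t, ht, hpath⟩ := M.exists_pathLen_mem_T hlev hreach s
  exact (M.pmin_pow_le_P_pow_of_pathLen hpath).trans
    (single_le_sum (fun u _ => M.P_pow_nonneg k s u) ht)

theorem P_row_of_mem_T {u : S} (hu : u ∈ M.T) : M.P u = (1 : Matrix S S ℝ) u := by
  ext v
  rcases eq_or_ne u v with rfl | huv
  · simpa [P] using M.absorbing u hu
  · have hpair : M.δ u u + M.δ u v ≤ 1 := by
      rw [← M.rowsum u, ← sum_pair huv]
      exact sum_le_sum_of_subset_of_nonneg (subset_univ _) fun w _ _ => M.nonneg u w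
    have := M.absorbing u hu
    simp only [P, of_apply, one_apply_ne huv]
    linarith [M.nonneg u v]

theorem P_pow_row_of_mem_T {u : S} (hu : u ∈ M.T) (n : ℕ) :
    (M.P ^ n) u = (1 : Matrix S S ℝ) u := by
  induction n with
  | zero => rfl
  | succ n ih =>
    ext v
    calc (M.P ^ (n + 1)) u v = ((1 : Matrix S S ℝ) * M.P ^ n) u v := by
          simp only [pow_succ', mul_apply, M.P_row_of_mem_T hu]
      _ = (1 : Matrix S S ℝ) u v := by rw [one_mul, ih]

noncomputable def notHitBy (s : S) (n : ℕ) : ℝ :=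
  ∑ u ∈ univ.filter (· ∉ M.T), (M.P ^ n) s u

theorem hitBy_add_notHitBy (s : S) (n : ℕ) : M.hitBy s n + M.notHitBy s n = 1 := by
  rw [hitBy, notHitBy, ← M.sum_P_pow n s, ← sum_filter_add_sum_filter_not univ (· ∈ M.T)]
  simp

theorem notHitBy_nonneg (s : S) (n : ℕ) : 0 ≤ M.notHitBy s n :=
  sum_nonneg fun u _ => M.P_pow_nonneg n s u

theorem hitBy_le_one (s : S) (n : ℕ) : M.hitBy s n ≤ 1 := by
  linarith [M.hitBy_add_notHitBy s n, M.notHitBy_nonneg s n]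

theorem notHitBy_le_one (s : S) (n : ℕ) : M.notHitBy s n ≤ 1 := by
  have : 0 ≤ M.hitBy s n := sum_nonneg fun t _ => M.P_pow_nonneg n s t
  linarith [M.hitBy_add_notHitBy s n]

theorem notHitBy_of_mem_T {u : S} (hu : u ∈ M.T) (n : ℕ) : M.notHitBy u n = 0 := by
  refine sum_eq_zero fun v hv => ?_
  have huv : u ≠ v := by rintro rfl; exact (mem_filter.1 hv).2 hu
  rw [M.P_pow_row_of_mem_T hu, one_apply_ne huv]

theorem notHitBy_add (s : S) (n m : ℕ) :
    M.notHitBy s (n + m) = ∑ u, (M.P ^ n) s u * M.notHitBy u m := by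
  simp only [notHitBy, pow_add, mul_apply, mul_sum]
  exact sum_comm

theorem notHitBy_add_le_mul {m : ℕ} {r : ℝ} (h : ∀ u ∉ M.T, M.notHitBy u m ≤ r) (s : S)
    (n : ℕ) : M.notHitBy s (n + m) ≤ r * M.notHitBy s n := by
  rw [M.notHitBy_add, notHitBy, mul_sum, sum_filter]
  refine sum_le_sum fun u _ => ?_
  split_ifs with hu
  · rw [M.notHitBy_of_mem_T hu, mul_zero]
  · rw [mul_comm r]; exact mul_le_mul_of_nonneg_left (h u hu) (M.P_pow_nonneg n s u)

theorem sum_range_notHitBy_le [Nonempty S] {k : ℕ} (hk : 1 ≤ k) (hlev : M.hasLevels k)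
    (hreach : ∀ a : S, reaches M.edge (M.T : Set S) a) (s : S) (N : ℕ) :
    ∑ n ∈ range N, M.notHitBy s n ≤ k / M.pmin ^ k := by
  have hpos : 0 < M.pmin ^ k := pow_pos M.pmin_pos k
  have hcontract : ∀ u, M.notHitBy u k ≤ 1 - M.pmin ^ k := fun u => by
    linarith [M.hitBy_add_notHitBy u k, M.pmin_pow_le_hitBy hlev hreach u]
  simpa using sum_range_le_of_add_le_mul hk (sub_nonneg.2 (M.pmin_pow_le_one k))
    (sub_lt_self 1 hpos) (M.notHitBy_nonneg s) (M.notHitBy_le_one s)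
    (M.notHitBy_add_le_mul (fun u _ => hcontract u) s) N

section weights

variable {w : S → ℝ} {c : ℝ}

theorem reachVal_le (hc : 0 ≤ c) (hwc : ∀ a, w a ≤ c) (s : S) : M.reachVal w s ≤ c :=
  ciSup_le fun n =>
    calc ∑ t ∈ M.T, (M.P ^ n) s t * w t ≤ ∑ t ∈ M.T, (M.P ^ n) s t * c :=
          sum_le_sum fun t _ => mul_le_mul_of_nonneg_left (hwc t) (M.P_pow_nonneg n s t)
      _ = M.hitBy s n * c := (sum_mul _ _ _).symm
      _ ≤ c := mul_le_of_le_one_left hc (M.hitBy_le_one s n)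

theorem tsum_weight_before_hit_le [Nonempty S] {k : ℕ} (hk : 1 ≤ k) (hlev : M.hasLevels k)
    (hreach : ∀ a : S, reaches M.edge (M.T : Set S) a) (hw0 : ∀ a, 0 ≤ w a)
    (hwc : ∀ a, w a ≤ c) (s : S) :
    ∑' n : ℕ, ∑ u ∈ univ.filter (· ∉ M.T), (M.P ^ n) s u * w u ≤ c * (k / M.pmin ^ k) := by
  have hc : 0 ≤ c := (hw0 (Classical.arbitrary S)).trans (hwc _)
  refine Real.tsum_le_of_sum_range_le
    (fun n => sum_nonneg fun u _ => mul_nonneg (M.P_pow_nonneg n s u) (hw0 u)) fun N => ?_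
  calc ∑ n ∈ range N, ∑ u ∈ univ.filter (· ∉ M.T), (M.P ^ n) s u * w u
      ≤ ∑ n ∈ range N, c * M.notHitBy s n := sum_le_sum fun n _ => by
        rw [notHitBy, mul_sum]
        exact sum_le_sum fun u _ => by
          rw [mul_comm c]; exact mul_le_mul_of_nonneg_left (hwc u) (M.P_pow_nonneg n s u)
    _ = c * ∑ n ∈ range N, M.notHitBy s n := (mul_sum _ _ _).symm
    _ ≤ c * (k / M.pmin ^ k) :=
        mul_le_mul_of_nonneg_left (M.sum_range_notHitBy_le hk hlev hreach s N) hc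

theorem sspVal_le [Nonempty S] {k : ℕ} (hk : 1 ≤ k) (hlev : M.hasLevels k)
    (hreach : ∀ a : S, reaches M.edge (M.T : Set S) a) (hw0 : ∀ a, 0 ≤ w a)
    (hwc : ∀ a, w a ≤ c) (s : S) :
    M.sspVal w s ≤ c * (k + 1) / M.pmin ^ k := by
  have hc : 0 ≤ c := (hw0 (Classical.arbitrary S)).trans (hwc _)
  have hpos : 0 < M.pmin ^ k := pow_pos M.pmin_pos k
  calc M.sspVal w s ≤ c * (k / M.pmin ^ k) + c :=
        add_le_add (M.tsum_weight_before_hit_le hk hlev hreach hw0 hwc s) (M.reachVal_le hc hwc s)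
    _ ≤ c * (k / M.pmin ^ k) + c / M.pmin ^ k := by
        gcongr
        exact le_div_self hc hpos (M.pmin_pow_le_one k)
    _ = c * (k + 1) / M.pmin ^ k := by ring

end weights

end MC

/-- In a Markov chain with `k ≥ 1` levels in which every state can
reach `T`, the stochastic shortest path value of every state is at most
`w_max·(k+1)/p_min^k`. -/
theorem stmt_11 {S : Type} [Fintype S] [DecidableEq S] [Nonempty S]
    (M : MC S) (k : ℕ) (hk : 1 ≤ k) (hlev : M.hasLevels k)
    (hreach : ∀ a : S, reaches M.edge (M.T : Set S) a)
    (w : S → ℝ) (hw : ∀ a : S, 0 < w a) :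
    ∀ s : S, M.sspVal w s ≤ sSup (Set.range w) * ((k : ℝ) + 1) / M.pmin ^ k :=
  M.sspVal_le hk hlev hreach (fun a => (hw a).le)
    (fun a => le_csSup (Set.finite_range w).bddAbove ⟨a, rfl⟩)
end

section
/- Let G be a finite directed graph on a set S of n ≥ 1 vertices and let T ⊆ S be a target set. Then there exists a set I ⊆ S \ T with |I| ≤ 9·√n such that every vertex from which T ∪ I is reachable has shortest directed-path distance at most √n to T ∪ I; equivalently, the Markov chain in which the states of I are turned into additional targets has at most √n levels. -/
variable {S : Type} [Fintype S] [DecidableEq S]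

section Paths

variable {α : Type} {r : α → α → Prop} {A B : Set α} {a b c s : α} {m n : ℕ}

lemma pathLen_add (h₁ : pathLen r m a b) (h₂ : pathLen r n b c) : pathLen r (m + n) a c := by
  induction m generalizing a with
  | zero =>
    obtain rfl : a = b := h₁
    rwa [Nat.zero_add]
  | succ m ih =>
    obtain ⟨x, hax, hxb⟩ := h₁
    rw [Nat.succ_add]
    exact ⟨x, hax, ih hxb⟩

lemma exists_pathLen_of_pathLen_add (h : pathLen r (m + n) a c) :
    ∃ b, pathLen r m a b ∧ pathLen r n b c := by
  induction m generalizing a with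
  | zero =>
    rw [Nat.zero_add] at h
    exact ⟨a, rfl, h⟩
  | succ m ih =>
    rw [Nat.succ_add] at h
    obtain ⟨x, hax, hxc⟩ := h
    obtain ⟨b, hxb, hbc⟩ := ih hxc
    exact ⟨b, ⟨x, hax, hxb⟩, hbc⟩

lemma reaches_of_forall_reaches (hB : ∀ b ∈ B, reaches r A b) (hs : reaches r B s) :
    reaches r A s := by
  obtain ⟨m, b, hb, hsb⟩ := hs
  obtain ⟨n, a, ha, hba⟩ := hB b hb
  exact ⟨m + n, a, ha, pathLen_add hsb hba⟩

lemma distTo_le_of_pathLen (ha : a ∈ A) (h : pathLen r n s a) : distTo r A s ≤ n :=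
  Nat.sInf_le ⟨a, ha, h⟩

lemma exists_pathLen_distTo (h : reaches r A s) : ∃ a ∈ A, pathLen r (distTo r A s) s a :=
  Nat.sInf_mem h

lemma exists_pathLen_distTo_sub (h : reaches r A s) (hi : m ≤ distTo r A s) :
    ∃ v, pathLen r m s v ∧ reaches r A v ∧ distTo r A v = distTo r A s - m := by
  obtain ⟨a, ha, hsa⟩ := exists_pathLen_distTo h
  rw [← Nat.add_sub_cancel' hi] at hsa
  obtain ⟨v, hsv, hva⟩ := exists_pathLen_of_pathLen_add hsa
  have hv : reaches r A v := ⟨_, a, ha, hva⟩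
  refine ⟨v, hsv, hv, le_antisymm (distTo_le_of_pathLen ha hva) ?_⟩
  obtain ⟨a', ha', hva'⟩ := exists_pathLen_distTo hv
  have := distTo_le_of_pathLen ha' (pathLen_add hsv hva')
  omega

/-- Along a shortest path from `s` to `A`, the distances to `A` of the first `k` vertices run
through all residues modulo `k` (unless `A` itself is closer). -/
lemma distTo_lt_of_forall_mod_eq_mem {j k : ℕ} (hjk : j < k) (hAB : A ⊆ B)
    (hB : ∀ v, reaches r A v → distTo r A v % k = j → v ∈ B) (hs : reaches r A s) :
    distTo r B s < k := by
  set d := distTo r A s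
  obtain hdk | hkd := lt_or_ge d k
  · obtain ⟨a, ha, hsa⟩ := exists_pathLen_distTo hs
    exact (distTo_le_of_pathLen (hAB ha) hsa).trans_lt hdk
  have hdiv := Nat.div_add_mod (d - j) k
  have hmod : (d - j) % k < k := Nat.mod_lt _ (by omega)
  obtain ⟨v, hsv, hv, hdv⟩ := exists_pathLen_distTo_sub hs (m := (d - j) % k) (by omega)
  have hvB : v ∈ B := by
    refine hB v hv ?_
    have : d - (d - j) % k = j + k * ((d - j) / k) := by omega
    rw [hdv, this, Nat.add_mul_mod_self_left, Nat.mod_eq_of_lt hjk]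
  exact (distTo_le_of_pathLen hvB hsv).trans_lt hmod

end Paths

lemma natCast_div_natSqrt_le {n : ℕ} (hn : 1 ≤ n) : (n : ℝ) / Nat.sqrt n ≤ 2 * √n := by
  have hk : (1 : ℝ) ≤ Nat.sqrt n := by exact_mod_cast Nat.sqrt_pos.2 hn
  have hsqrt : √(n : ℝ) < Nat.sqrt n + 1 := Real.real_sqrt_lt_nat_sqrt_succ
  rw [div_le_iff₀ (by positivity)]
  calc (n : ℝ) = √n * √n := (Real.mul_self_sqrt n.cast_nonneg).symm
    _ ≤ 2 * √n * Nat.sqrt n := by nlinarith [Real.sqrt_nonneg n]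

/-- With `k = ⌊√n⌋`, sort the vertices outside `T` that reach `T` by their distance to `T`
modulo `k`, and let `I` be the smallest of the `k` classes, so `|I| ≤ n / k ≤ 2√n`. -/
theorem stmt_12 {S : Type} [Fintype S] [DecidableEq S]
    (hS : 1 ≤ Fintype.card S) (r : S → S → Prop) (T : Finset S) :
    ∃ I : Finset S, (∀ a ∈ I, a ∉ T) ∧
      (I.card : ℝ) ≤ 9 * Real.sqrt (Fintype.card S) ∧
      ∀ s : S, reaches r ((T ∪ I : Finset S) : Set S) s →
        (distTo r ((T ∪ I : Finset S) : Set S) s : ℝ) ≤ Real.sqrt (Fintype.card S) := by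
  classical
  set k := Nat.sqrt (Fintype.card S)
  have hk : 0 < k := Nat.sqrt_pos.2 hS
  set F := Finset.univ.filter fun s => s ∉ T ∧ reaches r (T : Set S) s
  obtain ⟨j, hj, hfiber⟩ := Finset.exists_card_fiber_le_of_card_le_nsmul
    (f := fun s => distTo r (T : Set S) s % k) (b := (F.card : ℝ) / k)
    (Finset.nonempty_range_iff.2 hk.ne')
    (by rw [Finset.card_range, nsmul_eq_mul, mul_div_cancel₀ _ (by positivity)])
  refine ⟨F.filter fun s => distTo r (T : Set S) s % k = j,
    fun a ha => (Finset.mem_filter.1 (Finset.mem_filter.1 ha).1).2.1, ?_, ?_⟩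
  · calc _ ≤ (F.card : ℝ) / k := hfiber
      _ ≤ (Fintype.card S : ℝ) / k := by gcongr; exact_mod_cast F.card_le_univ
      _ ≤ 2 * √(Fintype.card S) := natCast_div_natSqrt_le hS
      _ ≤ 9 * √(Fintype.card S) := by linarith [Real.sqrt_nonneg (Fintype.card S)]
  set I := F.filter fun s => distTo r (T : Set S) s % k = j
  have hreach : ∀ b ∈ ((T ∪ I : Finset S) : Set S), reaches r (T : Set S) b := by
    intro b hb
    rcases Finset.mem_union.1 hb with hbT | hbI
    · exact ⟨0, b, hbT, rfl⟩
    · exact (Finset.mem_filter.1 (Finset.mem_filter.1 hbI).1).2.2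
  have hres : ∀ v, reaches r (T : Set S) v → distTo r (T : Set S) v % k = j →
      v ∈ ((T ∪ I : Finset S) : Set S) := by
    intro v hv hvj
    by_cases hvT : v ∈ T
    · exact Finset.mem_union_left I hvT
    · exact Finset.mem_union_right T (by simp [I, F, hvT, hv, hvj])
  intro s hs
  have hsk := distTo_lt_of_forall_mod_eq_mem (Finset.mem_range.1 hj)
    (by simp) hres (reaches_of_forall_reaches hreach hs)
  calc (distTo r ((T ∪ I : Finset S) : Set S) s : ℝ) ≤ k := by exact_mod_cast hsk.le
    _ ≤ √(Fintype.card S) := Real.nat_sqrt_le_real_sqrt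
end
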